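/- For any Kelvin–Planck theory (Σ,P), the set of Clausius–Duhem temperature scales is dense (in the sup-norm topology of C(Σ,ℝ)) in the set of strong Clausius temperature scales, i.e., the set of continuous strictly positive T : Σ → ℝ satisfying ∫_Σ (1/T) dq ≤ 0 for every q ∈ M(Σ) with (0,q) ∈ \hat{P}. -/

import Mathlib

open Set

noncomputable section

/-- Signed regular Borel measures on `X`, modeled via the Riesz representation
theorem as the weak-star dual of `C(X, ℝ)`. -/
abbrev Meas (X : Type*) [TopologicalSpace X] := WeakDual ℝ C(X, ℝ)

/-- The ambient space containing `V(X) = M°(X) ⊕ M(X)`; membership in the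
subspace `M°(X)` of the first component is expressed by `p.1 1 = 0`. -/
abbrev VSp (X : Type*) [TopologicalSpace X] := Meas X × Meas X

/-- The cone of nonnegative measures. -/
def PosMeas (X : Type*) [TopologicalSpace X] : Set (Meas X) :=
  {μ | ∀ f : C(X, ℝ), (∀ x, 0 ≤ f x) → 0 ≤ μ f}

variable {X : Type*} [TopologicalSpace X]

/-- The Dirac measure at a point, i.e. the evaluation functional. -/
def dirac (x : X) : Meas X :=
  (⟨⟨⟨fun f => f x, fun _ _ => rfl⟩, fun _ _ => rfl⟩,
    continuous_eval_const x⟩ : C(X, ℝ) →L[ℝ] ℝ)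

/-- The set of nonnegative multiples of members of `P`. -/
def coneOf (P : Set (VSp X)) : Set (VSp X) :=
  {x | ∃ c : ℝ, 0 ≤ c ∧ ∃ p ∈ P, x = c • p}

/-- `\hat P`, the weak-star closure of the cone generated by `P`. -/
def hatP (P : Set (VSp X)) : Set (VSp X) :=
  closure (coneOf P)

/-- A thermodynamical theory: processes have change of condition with total mass
zero (i.e. `P ⊆ V(X)`), and `\hat P` is convex. -/
def IsThermoTheory (P : Set (VSp X)) : Prop :=
  (∀ p ∈ P, p.1 (1 : C(X, ℝ)) = 0) ∧ Convex ℝ (hatP P)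

/-- A Kelvin–Planck theory: a thermodynamical theory with
`\hat P ∩ ({0} × M₊(X)) = {(0,0)}`. -/
def IsKelvinPlanck (P : Set (VSp X)) : Prop :=
  IsThermoTheory P ∧ hatP P ∩ (({0} : Set (Meas X)) ×ˢ PosMeas X) = {(0, 0)}

/-- A Clausius–Duhem pair `(η, T)` for the theory `P`: `η` and `T` are continuous,
`T` is strictly positive, and for every continuous `β` equal pointwise to `1/T`
(such a `β` exists, and is unique, by positivity of `T`), the Clausius–Duhem
inequality `∫ η d(Δm) ≥ ∫ (1/T) dq` holds for every process in `P`. -/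
def IsCDPair (P : Set (VSp X)) (η T : C(X, ℝ)) : Prop :=
  (∀ x, 0 < T x) ∧
    ∀ β : C(X, ℝ), (∀ x, β x = (T x)⁻¹) → ∀ p ∈ P, p.2 β ≤ p.1 η

/-- A Clausius–Duhem temperature scale. -/
def IsCDTemp (P : Set (VSp X)) (T : C(X, ℝ)) : Prop :=
  ∃ η : C(X, ℝ), IsCDPair P η T

/-- Two states are of the same hotness: both `(0, δ_a − δ_b)` and `(0, δ_b − δ_a)`
belong to `\hat P`. -/
def SameHotness (P : Set (VSp X)) (a b : X) : Prop :=
  ((0 : Meas X), dirac a - dirac b) ∈ hatP P ∧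
    ((0 : Meas X), dirac b - dirac a) ∈ hatP P

/-- The hotness level of a state. -/
def hotnessLevel (P : Set (VSp X)) (a : X) : Set X :=
  {b | SameHotness P a b}

/-- A subset of the state space that is a hotness level. -/
def IsHotnessLevel (P : Set (VSp X)) (h : Set X) : Prop :=
  ∃ a : X, h = hotnessLevel P a

/-- The (signed) measure `μ` is supported in the set `A`: `μ` annihilates every
continuous function vanishing on `A`. -/
def SuppIn (μ : Meas X) (A : Set X) : Prop :=
  ∀ f : C(X, ℝ), (∀ x ∈ A, f x = 0) → μ f = 0

/-- `\hat Q` contains a passive heat transfer from hotness level `h` to `h'`: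
an element `(0, μ − μ')` of `\hat Q` with `μ, μ'` nonnegative, `supp μ ⊆ h`,
`supp μ' ⊆ h'` and `μ(h) = μ'(h') > 0` (the common value being the total mass). -/
def IsPassiveHT (Q : Set (VSp X)) (h h' : Set X) : Prop :=
  ∃ μ μ' : Meas X, μ ∈ PosMeas X ∧ μ' ∈ PosMeas X ∧ SuppIn μ h ∧ SuppIn μ' h' ∧
    μ (1 : C(X, ℝ)) = μ' (1 : C(X, ℝ)) ∧ 0 < μ (1 : C(X, ℝ)) ∧
    ((0 : Meas X), μ - μ') ∈ hatP Q

/-- Hotness level `h'` is hotter than `h`: the levels are distinct and every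
thermodynamical theory whose closed process cone contains `P` together with a
passive heat transfer from `h` to `h'` fails to be a Kelvin–Planck theory. -/
def Hotter (P : Set (VSp X)) (h' h : Set X) : Prop :=
  h' ≠ h ∧ ∀ Pd : Set (VSp X), IsThermoTheory Pd → P ⊆ hatP Pd →
    IsPassiveHT Pd h h' → ¬ IsKelvinPlanck Pd

/-- State `a` is hotter than state `b`. -/
def HotterState (P : Set (VSp X)) (a b : X) : Prop :=
  Hotter P (hotnessLevel P a) (hotnessLevel P b)

/-- A Carnot element of the theory `P` operating between hotness levels `h'` and
`h`: a reversible cyclic element `(0, μ' − μ)` with `μ', μ` nonzero nonnegative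
measures supported in `h'`, `h` respectively. -/
def IsCarnotBetween (P : Set (VSp X)) (h' h : Set X) (p : VSp X) : Prop :=
  p ∈ hatP P ∧ -p ∈ hatP P ∧
    ∃ μ' μ : Meas X, μ' ∈ PosMeas X ∧ μ ∈ PosMeas X ∧ μ' ≠ 0 ∧ μ ≠ 0 ∧
      SuppIn μ' h' ∧ SuppIn μ h ∧ p = ((0 : Meas X), μ' - μ)

end

/-
The reciprocals `β = 1 / T` of Clausius–Duhem scales, each with its entropy `η`, form a convex
cone `D ⊆ C(X)`. Every `q ∈ M(X)` that is nonpositive on `D` has `(0, q) ∈ \hat P`: the continuous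
functionals on the weak-star space `V(X)` are the pairings with `C(X) × C(X)`, so a functional
`(η, β)` separating `(0, q)` from the closed convex cone `\hat P` (Farkas) yields `-β ∈ D` with
`q (-β) > 0`. Separating `1 / T` from the closure of `D` in the same way, the strong Clausius
condition puts `1 / T` in that closure; as inversion is continuous at the strictly positive
function `1 / T`, inverting nearby positive elements of `D` gives Clausius–Duhem scales near `T`.
-/

section WeakDual

variable {E : Type*} [TopologicalSpace E] [AddCommGroup E] [Module ℝ E]

instance WeakDual.instLocallyConvexSpace : LocallyConvexSpace ℝ (WeakDual ℝ E) :=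
  WeakBilin.locallyConvexSpace

theorem WeakDual.exists_eq_eval (G : StrongDual ℝ (WeakDual ℝ E)) :
    ∃ e : E, ∀ μ : WeakDual ℝ E, G μ = μ e := by
  obtain ⟨e, rfl⟩ := LinearMap.dualEmbedding_surjective (topDualPairing ℝ E) G
  exact ⟨e, fun _ => rfl⟩

theorem WeakDual.exists_eq_eval_prod (G : StrongDual ℝ (WeakDual ℝ E × WeakDual ℝ E)) :
    ∃ e₁ e₂ : E, ∀ p : WeakDual ℝ E × WeakDual ℝ E, G p = p.1 e₁ + p.2 e₂ := by
  obtain ⟨e₁, he₁⟩ := exists_eq_eval (G.comp (.inl ℝ _ _))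
  obtain ⟨e₂, he₂⟩ := exists_eq_eval (G.comp (.inr ℝ _ _))
  exact ⟨e₁, e₂, fun p => by rw [← G.comp_inl_add_comp_inr p, he₁, he₂]⟩

end WeakDual

namespace ContinuousMap

variable {X : Type*} [TopologicalSpace X]

theorem units_inv_apply {M : Type*} [DivisionMonoid M] [TopologicalSpace M] [ContinuousMul M]
    (u : C(X, M)ˣ) (x : X) : (↑u⁻¹ : C(X, M)) x = ((u : C(X, M)) x)⁻¹ :=
  eq_inv_of_mul_eq_one_right (congr_fun (congrArg DFunLike.coe u.mul_inv) x)

theorem isOpen_setOf_forall_pos [CompactSpace X] : IsOpen {f : C(X, ℝ) | ∀ x, 0 < f x} := by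
  simpa [MapsTo] using isOpen_setOfPred_mapsTo isCompact_univ (isOpen_Ioi (a := (0 : ℝ)))

end ContinuousMap

section Thermo

open scoped Pointwise

variable {X : Type*} [TopologicalSpace X] {P : Set (VSp X)}

theorem subset_hatP : P ⊆ hatP P :=
  fun p hp => subset_closure ⟨1, zero_le_one, p, hp, (one_smul ℝ p).symm⟩

theorem hatP_empty : hatP (∅ : Set (VSp X)) = ∅ := by
  simp [hatP, coneOf]

theorem zero_mem_hatP (hP : P.Nonempty) : (0 : VSp X) ∈ hatP P :=
  let ⟨p, hp⟩ := hP
  subset_closure ⟨0, le_rfl, p, hp, (zero_smul ℝ p).symm⟩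

theorem smul_mem_hatP {t : ℝ} (ht : 0 ≤ t) {p : VSp X} (hp : p ∈ hatP P) : t • p ∈ hatP P := by
  have hcone : t • coneOf P ⊆ coneOf P := by
    rintro _ ⟨_, ⟨c, hc, p, hp, rfl⟩, rfl⟩
    exact ⟨t * c, mul_nonneg ht hc, p, hp, smul_smul t c p⟩
  exact closure_mono hcone (smul_closure_subset t _ (smul_mem_smul_set hp))

theorem add_mem_hatP (hconv : Convex ℝ (hatP P)) {p q : VSp X} (hp : p ∈ hatP P)
    (hq : q ∈ hatP P) : p + q ∈ hatP P := by
  have hmid := hconv hp hq (by norm_num : (0 : ℝ) ≤ 1 / 2) (by norm_num) (add_halves 1)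
  convert smul_mem_hatP (by norm_num : (0 : ℝ) ≤ 2) hmid using 1
  rw [← smul_add, smul_smul]
  norm_num

def hatCone (hconv : Convex ℝ (hatP P)) (hP : P.Nonempty) : ProperCone ℝ (VSp X) where
  carrier := hatP P
  add_mem' := add_mem_hatP hconv
  zero_mem' := zero_mem_hatP hP
  smul_mem' c _ hp := smul_mem_hatP c.2 hp
  isClosed' := isClosed_closure

-- The reciprocals `1 / T` of Clausius–Duhem scales, with the inequality imposed on all of `\hat P`.
def cdCone (P : Set (VSp X)) : PointedCone ℝ C(X, ℝ) where
  carrier := {β | ∃ η : C(X, ℝ), ∀ p ∈ hatP P, p.2 β ≤ p.1 η}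
  add_mem' := by
    rintro β₁ β₂ ⟨η₁, h₁⟩ ⟨η₂, h₂⟩
    exact ⟨η₁ + η₂, fun p hp => by simpa only [map_add] using add_le_add (h₁ p hp) (h₂ p hp)⟩
  zero_mem' := ⟨0, fun p _ => by simp⟩
  smul_mem' := by
    rintro c β ⟨η, h⟩
    refine ⟨(c : ℝ) • η, fun p hp => ?_⟩
    change p.2 ((c : ℝ) • β) ≤ p.1 ((c : ℝ) • η)
    simp only [map_smul, smul_eq_mul]
    exact mul_le_mul_of_nonneg_left (h p hp) c.2

theorem zero_prod_mem_hatP_of_nonpos_on_cdCone (hconv : Convex ℝ (hatP P)) (hP : P.Nonempty) {q : Meas X}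
    (hq : ∀ β ∈ cdCone P, q β ≤ 0) : ((0 : Meas X), q) ∈ hatP P := by
  by_contra h
  obtain ⟨G, hG, hGq⟩ := (hatCone hconv hP).hyperplane_separation_point h
  obtain ⟨η, β, hGeq⟩ := WeakDual.exists_eq_eval_prod G
  have hβ : -β ∈ cdCone P := ⟨η, fun p hp => by
    have hGp := hG p hp
    rw [hGeq] at hGp
    rw [map_neg]
    linarith⟩
  have hqβ : q (-β) ≤ 0 := hq _ hβ
  rw [hGeq] at hGq
  change 0 + q β < 0 at hGq
  rw [map_neg] at hqβ
  linarith

theorem mem_closure_cdCone_of_nonpos_on_hatP (hconv : Convex ℝ (hatP P)) {β : C(X, ℝ)}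
    (hβ : ∀ q : Meas X, ((0 : Meas X), q) ∈ hatP P → q β ≤ 0) :
    β ∈ closure (cdCone P : Set C(X, ℝ)) := by
  rcases P.eq_empty_or_nonempty with rfl | hP
  · exact subset_closure ⟨0, by simp [hatP_empty]⟩
  by_contra h
  obtain ⟨f, hf, hfβ⟩ := ProperCone.hyperplane_separation_point (Submodule.closure (cdCone P)) h
  have hfβ' : -f β ≤ 0 := hβ (-f) (zero_prod_mem_hatP_of_nonpos_on_cdCone hconv hP fun g hg =>
    neg_nonpos.2 (hf g (subset_closure hg)))
  linarith

theorem isCDTemp_inverse {β : C(X, ℝ)} (hβ : β ∈ cdCone P) (hpos : ∀ x, 0 < β x) :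
    IsCDTemp P (Ring.inverse β) := by
  lift β to C(X, ℝ)ˣ using β.isUnit_iff_forall_ne_zero.2 fun x => (hpos x).ne'
  obtain ⟨η, hη⟩ := hβ
  rw [Ring.inverse_unit]
  refine ⟨η, fun x => by simpa [ContinuousMap.units_inv_apply] using hpos x,
    fun β' hβ' p hp => ?_⟩
  obtain rfl : β' = β := ContinuousMap.ext fun x => by
    rw [hβ', ContinuousMap.units_inv_apply, inv_inv]
  exact hη p (subset_hatP hp)

end Thermo

theorem cd_scales_dense_in_strong_clausius_scales_general
    {X : Type*} [TopologicalSpace X] [CompactSpace X]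
    (P : Set (VSp X)) (hP : IsKelvinPlanck P) :
    {T : C(X, ℝ) | (∀ x, 0 < T x) ∧
        ∀ q : Meas X, ((0 : Meas X), q) ∈ hatP P →
          ∀ β : C(X, ℝ), (∀ x, β x = (T x)⁻¹) → q β ≤ 0} ⊆
      closure {T : C(X, ℝ) | IsCDTemp P T} := by
  rintro T ⟨hTpos, hTstrong⟩
  lift T to C(X, ℝ)ˣ using T.isUnit_iff_forall_ne_zero.2 fun x => (hTpos x).ne'
  have hinv := ContinuousMap.units_inv_apply T
  have hβ : (↑T⁻¹ : C(X, ℝ)) ∈ closure (cdCone P : Set C(X, ℝ)) :=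
    mem_closure_cdCone_of_nonpos_on_hatP hP.1.2 fun q hq => hTstrong q hq _ hinv
  have hβpos : ∀ x, 0 < (↑T⁻¹ : C(X, ℝ)) x := fun x => by
    simpa [hinv] using hTpos x
  have hT := mem_closure_image (NormedRing.inverse_continuousAt T⁻¹)
    (ContinuousMap.isOpen_setOf_forall_pos.inter_closure ⟨hβpos, hβ⟩)
  rw [Ring.inverse_unit, inv_inv] at hT
  refine closure_mono ?_ hT
  rintro _ ⟨β, ⟨hβpos, hβD⟩, rfl⟩
  exact isCDTemp_inverse hβD hβpos

/-- **Theorem.** For any Kelvin–Planck theory `(X, P)`, the set of Clausius–Duhem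
temperature scales is dense (in the sup-norm topology of `C(X, ℝ)`) in the set of
strong Clausius temperature scales, i.e. of the continuous strictly positive `T`
with `∫ (1/T) dq ≤ 0` for every `q ∈ M(X)` with `(0, q) ∈ \hat P`. -/
theorem cd_scales_dense_in_strong_clausius_scales
    {X : Type*} [TopologicalSpace X] [CompactSpace X] [T2Space X]
    (P : Set (VSp X)) (hP : IsKelvinPlanck P) :
    {T : C(X, ℝ) | (∀ x, 0 < T x) ∧
        ∀ q : Meas X, ((0 : Meas X), q) ∈ hatP P →
          ∀ β : C(X, ℝ), (∀ x, β x = (T x)⁻¹) → q β ≤ 0} ⊆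
      closure {T : C(X, ℝ) | IsCDTemp P T} :=
  cd_scales_dense_in_strong_clausius_scales_general P hP
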